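/- Let R be a φ-ring and M an R/Nil(R)-module that is FP-injective over R/Nil(R). Then M, viewed as an R-module, is nonnil-FP-injective over R. -/

import Mathlib

/-!
A finitely generated φ-torsion module `T` is killed by a single nonnil element `a`, the product
of nonnil annihilators of finitely many generators (nonnil elements are closed under products
because `Nil(R)` is prime). As `Nil(R) ⊆ aR`, `T` is an `R/Nil(R)`-module, finitely presented
over `R/Nil(R)`.

Let `R^n → T` be a presentation. `Ext¹_R(T, M) = 0` means that every map `ker(R^n → T) → M`
extends to `R^n`. Reduction mod `Nil(R)` maps `ker(R^n → T)` onto `ker((R/Nil(R))^n → T)`, with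
kernel the vectors `k` with nilpotent entries. Each entry is `kᵢ = dᵢ a` with `dᵢ` nilpotent, so
`k = ∑ dᵢ (a eᵢ)` lies in `Nil(R) • ker(R^n → T)`, and is killed by every map to `M`. Hence any
map `ker(R^n → T) → M` factors through `ker((R/Nil(R))^n → T)`, where FP-injectivity of `M`
over `R/Nil(R)` extends it to `(R/Nil(R))^n`.
-/

open CategoryTheory

/-- An `R`-module is φ-torsion if every element is annihilated by some nonnil ideal. -/
def IsPhiTorsion (R : Type*) [CommRing R] (M : Type*) [AddCommGroup M] [Module R M] : Prop :=
  ∀ x : M, ∃ I : Ideal R, ¬ I ≤ nilradical R ∧ ∀ a ∈ I, a • x = 0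

universe u v

open Limits

theorem CategoryTheory.Projective.d_comp {C : Type*} [Category C] [HasZeroMorphisms C]
    [EnoughProjectives C] {X Y : C} (f : X ⟶ Y) [HasKernel f] : Projective.d f ≫ f = 0 := by
  erw [Category.assoc, kernel.condition, comp_zero]

namespace CategoryTheory.ProjectiveResolution

variable {C : Type*} [Category C] [Abelian C] [EnoughProjectives C] {Z P : C} (π : P ⟶ Z)

noncomputable def ofEpiComplex : ChainComplex C ℕ :=
  ChainComplex.mk' P (Projective.syzygies π) (Projective.d π)
    (fun f => ⟨_, Projective.d f, Projective.d_comp f⟩)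

lemma ofEpiComplex_d_1_0 : (ofEpiComplex π).d 1 0 = Projective.d π := by
  simp [ofEpiComplex]

lemma ofEpiComplex_exactAt_succ (n : ℕ) : (ofEpiComplex π).ExactAt (n + 1) := by
  rw [HomologicalComplex.exactAt_iff' _ (n + 1 + 1) (n + 1) n (by simp) (by simp)]
  have e := exact_d_f ((ofEpiComplex π).d (n + 1) n)
  unfold ofEpiComplex at e ⊢
  refine ShortComplex.exact_of_iso ?_ e
  refine ShortComplex.isoMk (ChainComplex.mk'XIso P (Projective.syzygies π) (Projective.d π)
    (fun f => ⟨_, Projective.d f, Projective.d_comp f⟩) n).symm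
    (Iso.refl _) (Iso.refl _) ?_ ?_
  · erw [Iso.refl_hom, Category.comp_id, Iso.symm_hom, Iso.inv_comp_eq]
    exact ChainComplex.mk'_d P (Projective.syzygies π) (Projective.d π)
      (fun f => ⟨_, Projective.d f, Projective.d_comp f⟩) n
  · erw [Iso.refl_hom, Iso.refl_hom, Category.id_comp, Category.comp_id]
    rfl

instance [Projective P] (n : ℕ) : Projective ((ofEpiComplex π).X n) := by
  obtain (_ | _ | _ | n) := n
  · assumption
  all_goals apply Projective.projective_over

/-- Unlike `ProjectiveResolution.of`, which starts from an arbitrarily chosen projective cover,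
this resolution starts from the given epimorphism, so that `Ext` can be computed from any
projective presentation. -/
noncomputable def ofEpi [Projective P] [Epi π] : ProjectiveResolution Z where
  complex := ofEpiComplex π
  π := (ChainComplex.toSingle₀Equiv _ _).symm
    ⟨π, by rw [ofEpiComplex_d_1_0]; exact Projective.d_comp π⟩
  quasiIso := ⟨fun n => by
    cases n
    · rw [ChainComplex.quasiIsoAt₀_iff, ShortComplex.quasiIso_iff_of_zeros']
      · refine (ShortComplex.exact_and_epi_g_iff_of_iso ?_).2
          ⟨exact_d_f π, by dsimp; infer_instance⟩
        exact ShortComplex.isoMk (Iso.refl _) (Iso.refl _) (Iso.refl _)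
          (by erw [Category.id_comp, Category.comp_id]; exact (ofEpiComplex_d_1_0 π).symm)
          (by erw [Category.id_comp, Category.comp_id]
              exact (ChainComplex.toSingle₀Equiv_symm_apply_f_zero (C := ofEpiComplex π) π _).symm)
      all_goals rfl
    · rw [quasiIsoAt_iff_exactAt']
      · apply ofEpiComplex_exactAt_succ
      · apply ChainComplex.exactAt_succ_single_obj⟩

theorem subsingleton_ext_one_iff {R : Type*} [Ring R] [Linear R C] (Q : ProjectiveResolution Z)
    (M : C) :
    Subsingleton (((Ext R C 1).obj (Opposite.op Z)).obj M) ↔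
      ∀ f : kernel (Q.π.f 0) ⟶ M, ∃ g : Q.complex.X 0 ⟶ M, kernel.ι (Q.π.f 0) ≫ g = f := by
  rw [(Q.isoExt 1 M).toLinearEquiv.toEquiv.subsingleton_congr,
    ← ModuleCat.isZero_iff_subsingleton, ← HomologicalComplex.exactAt_iff_isZero_homology,
    HomologicalComplex.exactAt_iff' _ 0 1 2 (by simp) (by simp), ShortComplex.moduleCat_exact_iff]
  change (∀ φ : Q.complex.X 1 ⟶ M, Q.complex.d 2 1 ≫ φ = 0 →
    ∃ ψ : Q.complex.X 0 ⟶ M, Q.complex.d 1 0 ≫ ψ = φ) ↔ _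
  set p := kernel.lift (Q.π.f 0) (Q.complex.d 1 0) Q.complex_d_comp_π_f_zero
  have : Epi p := Q.exact₀.epi_kernelLift
  have hd : Q.complex.d 1 0 = p ≫ kernel.ι (Q.π.f 0) := (kernel.lift_ι _ _ _).symm
  have hd₂ : Q.complex.d 2 1 ≫ p = 0 := by
    rw [← cancel_mono (kernel.ι (Q.π.f 0)), Category.assoc, ← hd, Q.complex.d_comp_d, zero_comp]
  have hexp : (ShortComplex.mk _ _ hd₂).Exact := by
    let α : ShortComplex.mk _ _ hd₂ ⟶ ShortComplex.mk _ _ (Q.complex.d_comp_d 2 1 0) :=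
      { τ₁ := 𝟙 _, τ₂ := 𝟙 _, τ₃ := kernel.ι (Q.π.f 0)
        comm₁₂ := by dsimp; rw [Category.id_comp, Category.comp_id]
        comm₂₃ := by dsimp; rw [Category.id_comp]; exact hd }
    exact (ShortComplex.exact_iff_of_epi_of_isIso_of_mono α).2 (Q.exact_succ 0)
  constructor
  · intro h f
    obtain ⟨g, hg⟩ := h (p ≫ f) (by rw [← Category.assoc, hd₂, zero_comp])
    refine ⟨g, (cancel_epi p).1 ?_⟩
    rw [← Category.assoc, ← hd]
    exact hg
  · intro h φ hφ
    obtain ⟨g, hg⟩ := h (hexp.desc φ hφ)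
    exact ⟨g, by rw [hd, Category.assoc, hg]; exact hexp.g_desc φ hφ⟩

end CategoryTheory.ProjectiveResolution

theorem ModuleCat.forall_exists_kernel_ι_comp_iff {S : Type u} [Ring S] {P T : ModuleCat.{v} S}
    (π : P ⟶ T) (M : ModuleCat.{v} S) :
    (∀ f : kernel π ⟶ M, ∃ g : P ⟶ M, kernel.ι π ≫ g = f) ↔
      ∀ f : LinearMap.ker π.hom →ₗ[S] M, ∃ g : P →ₗ[S] M,
        g ∘ₗ (LinearMap.ker π.hom).subtype = f := by
  have hι := ModuleCat.kernelIsoKer_inv_kernel_ι π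
  set e := ModuleCat.kernelIsoKer π
  constructor
  · intro h f
    obtain ⟨g, hg⟩ := h (e.hom ≫ ModuleCat.ofHom f)
    have : ModuleCat.ofHom (LinearMap.ker π.hom).subtype ≫ g = ModuleCat.ofHom f := by
      rw [← hι, Category.assoc, hg, e.inv_hom_id_assoc]
    exact ⟨g.hom, congrArg ModuleCat.Hom.hom this⟩
  · intro h f
    obtain ⟨g, hg⟩ := h (e.inv ≫ f).hom
    refine ⟨ModuleCat.ofHom g, ?_⟩
    calc kernel.ι π ≫ ModuleCat.ofHom g = e.hom ≫ (e.inv ≫ kernel.ι π) ≫ ModuleCat.ofHom g := by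
          simp
      _ = f := by rw [hι, ← ModuleCat.ofHom_comp, hg]; simp

theorem ModuleCat.subsingleton_ext_one_iff {S : Type u} [CommRing S] {P T : ModuleCat.{u} S}
    [Projective P] (π : P ⟶ T) [Epi π] (M : ModuleCat.{u} S) :
    Subsingleton (((Ext S (ModuleCat.{u} S) 1).obj (Opposite.op T)).obj M) ↔
      ∀ f : LinearMap.ker π.hom →ₗ[S] M, ∃ g : P →ₗ[S] M,
        g ∘ₗ (LinearMap.ker π.hom).subtype = f := by
  rw [(ProjectiveResolution.ofEpi π).subsingleton_ext_one_iff]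
  exact ModuleCat.forall_exists_kernel_ι_comp_iff π M

theorem LinearMap.exists_comp_eq_of_ker_le {R M N P : Type*} [Ring R] [AddCommGroup M]
    [Module R M] [AddCommGroup N] [Module R N] [AddCommGroup P] [Module R P]
    {u : M →ₗ[R] N} (hu : Function.Surjective u) {v : M →ₗ[R] P}
    (h : LinearMap.ker u ≤ LinearMap.ker v) : ∃ w : N →ₗ[R] P, w ∘ₗ u = v :=
  ⟨(LinearMap.ker u).liftQ v h ∘ₗ (u.quotKerEquivOfSurjective hu).symm.toLinearMap, by
    ext x
    have : (u.quotKerEquivOfSurjective hu).symm (u x) = Submodule.Quotient.mk x :=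
      (LinearEquiv.symm_apply_eq _).2 rfl
    simp [this]⟩

theorem IsPhiTorsion.exists_smul_eq_zero {R T : Type*} [CommRing R] [(nilradical R).IsPrime]
    [AddCommGroup T] [Module R T] [Module.Finite R T] (hT : IsPhiTorsion R T) :
    ∃ a ∉ nilradical R, ∀ x : T, a • x = 0 := by
  obtain ⟨n, t, ht⟩ := Module.Finite.exists_fin (R := R) (M := T)
  have hann : ∀ i, ∃ b ∉ nilradical R, b • t i = 0 := fun i => by
    obtain ⟨I, hI, hIt⟩ := hT (t i)
    obtain ⟨b, hbI, hb⟩ := SetLike.not_le_iff_exists.1 hI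
    exact ⟨b, hb, hIt b hbI⟩
  choose b hb hbt using hann
  refine ⟨∏ i, b i, prod_mem (S := (nilradical R).primeCompl) fun i _ => hb i, fun x => ?_⟩
  have hspan : Submodule.span R (Set.range t) ≤ LinearMap.ker ((∏ i, b i) • LinearMap.id) := by
    rw [Submodule.span_le]
    rintro _ ⟨i, rfl⟩
    simp [← Finset.prod_erase_mul _ _ (Finset.mem_univ i), mul_smul, hbt]
  simpa using hspan (ht ▸ Submodule.mem_top : x ∈ Submodule.span R (Set.range t))

theorem Module.isTorsionBySet_of_le_span_singleton {R M : Type*} [CommSemiring R] [AddCommMonoid M]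
    [Module R M] {I : Ideal R} {a : R} (hI : I ≤ Ideal.span {a}) (ha : ∀ x : M, a • x = 0) :
    Module.IsTorsionBySet R M I := fun x c => by
  obtain ⟨d, hd⟩ := Ideal.mem_span_singleton'.1 (hI c.2)
  rw [← hd, mul_smul, ha, smul_zero]

theorem Module.isTorsionBySet_of_isScalarTower_quotient {R M : Type*} [CommRing R]
    [AddCommGroup M] [Module R M] {I : Ideal R} [Module (R ⧸ I) M] [IsScalarTower R (R ⧸ I) M] :
    Module.IsTorsionBySet R M I := fun x c => by
  rw [← algebraMap_smul (R ⧸ I) c.1 x, Ideal.Quotient.algebraMap_eq,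
    Ideal.Quotient.eq_zero_iff_mem.2 c.2, zero_smul]

theorem Fintype.surjective_linearCombination_of_isScalarTower {R S T ι : Type*}
    [CommSemiring R] [Semiring S] [Algebra R S] [AddCommMonoid T] [Module R T] [Module S T]
    [IsScalarTower R S T] [Fintype ι] {t : ι → T}
    (ht : Function.Surjective (Fintype.linearCombination R t)) :
    Function.Surjective (Fintype.linearCombination S t) := fun y => by
  obtain ⟨v, rfl⟩ := ht y
  exact ⟨algebraMap R S ∘ v, by simp [Fintype.linearCombination_apply, algebraMap_smul]⟩

theorem IsBaseChange.id_of_surjective_algebraMap {R S T : Type*} [CommRing R] [CommRing S]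
    [Algebra R S] (hS : Function.Surjective (algebraMap R S)) [AddCommGroup T] [Module R T]
    [Module S T] [IsScalarTower R S T] :
    IsBaseChange S (LinearMap.id : T →ₗ[R] T) :=
  IsBaseChange.of_lift_unique _ fun _ _ _ _ _ g =>
    ⟨g.extendScalarsOfSurjective hS, rfl, fun _ hg' => LinearMap.ext fun x => congrArg (· x) hg'⟩

theorem Module.FinitePresentation.of_surjective_algebraMap {R S T : Type*} [CommRing R]
    [CommRing S] [Algebra R S] (hS : Function.Surjective (algebraMap R S)) [AddCommGroup T]
    [Module R T] [Module S T] [IsScalarTower R S T] [Module.FinitePresentation R T] :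
    Module.FinitePresentation S T :=
  FinitePresentation.of_isBaseChange _ (IsBaseChange.id_of_surjective_algebraMap hS)

section QuotientPresentation

variable {R : Type*} [CommRing R] (I : Ideal R) {ι : Type*} [Fintype ι] {T : Type*}
  [AddCommGroup T] [Module R T] (t : ι → T) {M : Type*} [AddCommGroup M] [Module R M]

theorem map_ker_linearCombination_eq_zero_of_forall_mem [I.IsPrime] {a : R} (haI : a ∉ I)
    (hIa : I ≤ Ideal.span {a}) (ha : ∀ x : T, a • x = 0) (hM : Module.IsTorsionBySet R M I)
    (f : LinearMap.ker (Fintype.linearCombination R t) →ₗ[R] M)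
    (k : LinearMap.ker (Fintype.linearCombination R t)) (hk : ∀ i, k.1 i ∈ I) : f k = 0 := by
  classical
  have hdiv : ∀ i, ∃ c ∈ I, c * a = k.1 i := fun i => by
    obtain ⟨c, hc⟩ := Ideal.mem_span_singleton'.1 (hIa (hk i))
    exact ⟨c, (‹I.IsPrime›.mem_or_mem (hc ▸ hk i)).resolve_right haI, hc⟩
  choose c hcI hc using hdiv
  let u : ι → LinearMap.ker (Fintype.linearCombination R t) := fun i =>
    ⟨a • Pi.single i 1, by simp [ha]⟩
  have hk_eq : k = ∑ i, c i • u i := by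
    ext j
    simp [u, Pi.single_apply, ← hc, mul_comm]
  rw [hk_eq, map_sum]
  exact Finset.sum_eq_zero fun i _ => by rw [map_smul]; exact hM (a := ⟨c i, hcI i⟩)

theorem exists_comp_subtype_eq_of_quotient [Module (R ⧸ I) T] [IsScalarTower R (R ⧸ I) T]
    [Module (R ⧸ I) M] [IsScalarTower R (R ⧸ I) M]
    (hext : ∀ f : LinearMap.ker (Fintype.linearCombination (R ⧸ I) t) →ₗ[R ⧸ I] M,
      ∃ g : (ι → R ⧸ I) →ₗ[R ⧸ I] M,
        g ∘ₗ (LinearMap.ker (Fintype.linearCombination (R ⧸ I) t)).subtype = f)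
    (f : LinearMap.ker (Fintype.linearCombination R t) →ₗ[R] M)
    (hf : ∀ k : LinearMap.ker (Fintype.linearCombination R t), (∀ i, k.1 i ∈ I) → f k = 0) :
    ∃ g : (ι → R) →ₗ[R] M, g ∘ₗ (LinearMap.ker (Fintype.linearCombination R t)).subtype = f := by
  let q : (ι → R) →ₗ[R] (ι → R ⧸ I) := (Ideal.Quotient.mkₐ R I).toLinearMap.compLeft ι
  have hq : ∀ v, Fintype.linearCombination (R ⧸ I) t (q v) = Fintype.linearCombination R t v :=
    fun v => by
      simp [q, Fintype.linearCombination_apply, ← Ideal.Quotient.algebraMap_eq, algebraMap_smul]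
  let ρ : LinearMap.ker (Fintype.linearCombination R t) →ₗ[R]
      (LinearMap.ker (Fintype.linearCombination (R ⧸ I) t)).restrictScalars R :=
    q.restrict fun v hv => by simpa [hq] using hv
  have hρ : Function.Surjective ρ := by
    rintro ⟨x, hx⟩
    choose v hv using fun i => Ideal.Quotient.mk_surjective (I := I) (x i)
    have hqv : q v = x := funext hv
    exact ⟨⟨v, by rw [LinearMap.mem_ker, ← hq, hqv]; exact hx⟩, Subtype.ext hqv⟩
  have hker : LinearMap.ker ρ ≤ LinearMap.ker f := fun k hk =>
    hf k fun i => Ideal.Quotient.eq_zero_iff_mem.1 (congrFun (congrArg Subtype.val hk) i)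
  obtain ⟨w, hw⟩ := LinearMap.exists_comp_eq_of_ker_le hρ hker
  obtain ⟨g, hg⟩ := hext (w.extendScalarsOfSurjective Ideal.Quotient.mk_surjective ∘ₗ
    ((LinearMap.ker _).restrictScalarsEquiv R (R ⧸ I) _).symm.toLinearMap)
  refine ⟨g.restrictScalars R ∘ₗ q, ?_⟩
  rw [← hw]
  ext k
  exact LinearMap.congr_fun hg (ρ k)

end QuotientPresentation

/-- Let `R` be a φ-ring and `M` an `R/Nil(R)`-module which is FP-injective
over `R/Nil(R)`. Then `M`, viewed as an `R`-module, is nonnil-FP-injective over `R`. -/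
theorem stmt_8 (R : Type u) [CommRing R]
    (hp : (nilradical R).IsPrime)
    (hdiv : ∀ x ∉ nilradical R, nilradical R < Ideal.span {x})
    (M : Type u) [AddCommGroup M] [Module R M] [Module (R ⧸ nilradical R) M]
    [IsScalarTower R (R ⧸ nilradical R) M]
    (hFP : ∀ T : ModuleCat.{u} (R ⧸ nilradical R),
      Module.FinitePresentation (R ⧸ nilradical R) T →
      Subsingleton (((Ext (R ⧸ nilradical R) (ModuleCat.{u} (R ⧸ nilradical R)) 1).obj
        (Opposite.op T)).obj (ModuleCat.of (R ⧸ nilradical R) M))) :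
    ∀ T : ModuleCat.{u} R, Module.FinitePresentation R T → IsPhiTorsion R T →
      Subsingleton (((Ext R (ModuleCat.{u} R) 1).obj (Opposite.op T)).obj
        (ModuleCat.of R M)) := by
  intro T _ hT
  have := hp
  obtain ⟨a, haN, haT⟩ := hT.exists_smul_eq_zero
  have hTN := Module.isTorsionBySet_of_le_span_singleton (hdiv a haN).le haT
  let := hTN.module
  have := hTN.isScalarTower (S := R)
  have hTfp := Module.FinitePresentation.of_surjective_algebraMap (S := R ⧸ nilradical R)
    (T := T) Ideal.Quotient.mk_surjective
  obtain ⟨n, t, ht⟩ := Module.Finite.exists_fin (R := R) (M := T)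
  rw [span_range_eq_top_iff_surjective_fintypeLinearCombination] at ht
  have ht' := Fintype.surjective_linearCombination_of_isScalarTower (S := R ⧸ nilradical R) ht
  have : Epi (ModuleCat.ofHom (Fintype.linearCombination R t)) :=
    (ModuleCat.epi_iff_surjective _).2 ht
  have : Epi (ModuleCat.ofHom (Fintype.linearCombination (R ⧸ nilradical R) t)) :=
    (ModuleCat.epi_iff_surjective _).2 ht'
  have hext := (ModuleCat.subsingleton_ext_one_iff
    (ModuleCat.ofHom (Fintype.linearCombination (R ⧸ nilradical R) t)) _).1 (hFP _ hTfp)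
  refine (ModuleCat.subsingleton_ext_one_iff (T := T)
    (ModuleCat.ofHom (Fintype.linearCombination R t)) _).2 fun f => ?_
  exact exists_comp_subtype_eq_of_quotient _ t hext f fun k hk =>
    map_ker_linearCombination_eq_zero_of_forall_mem _ t haN (hdiv a haN).le haT
      Module.isTorsionBySet_of_isScalarTower_quotient f k hk
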